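/- arXiv:2309.00554 — 2 statements merged into one kernel-verified Lean document; each statement's English description precedes it below -/
import Mathlib

section
/- Let $t$ be a t-structure and $w$ a weight structure on the same triangulated category $\mathcal{C}$. Then the following are equivalent: (i) $\mathcal{C}^{t\leq 0} = \mathcal{C}_{w\leq 0}$ (left adjacency); (ii) $w$ is left orthogonal to $t$; (iii) $w$ is w-strictly left orthogonal to $t$; (iv) $w$ is t-strictly left orthogonal to $t$; (v) $w$ is w-t-strictly left orthogonal to $t$. -/
open CategoryTheory Limits Pretriangulated

namespace Paper

universe v u

variable {C : Type u} [Category.{v} C] [Preadditive C] [HasZeroObject C]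
  [HasShift C ℤ] [∀ n : ℤ, (shiftFunctor C n).Additive] [Pretriangulated C]

open CategoryTheory.Triangulated

/-- The right perpendicular of a class of objects. -/
def rPerp (T : Set C) : Set C := {Y | ∀ X ∈ T, ∀ f : X ⟶ Y, f = 0}

/-- The left perpendicular of a class of objects. -/
def lPerp (T : Set C) : Set C := {X | ∀ Y ∈ T, ∀ f : X ⟶ Y, f = 0}

/-- `S^{⊥_{>0}}`. -/
def perpGT (S : Set C) : Set C := {X | ∀ P ∈ S, ∀ m : ℤ, 0 < m → ∀ f : P ⟶ X⟦m⟧, f = 0}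

/-- `S^{⊥_{<0}}`. -/
def perpLT (S : Set C) : Set C := {X | ∀ P ∈ S, ∀ m : ℤ, m < 0 → ∀ f : P ⟶ X⟦m⟧, f = 0}

/-- The pair `(S^{⊥_{>0}}, S^{⊥_{<0}})` is the t-structure `t`. -/
def IsSiltingTStructureFor (S : Set C) (t : TStructure C) : Prop :=
  (∀ X : C, t.le 0 X ↔ X ∈ perpGT S) ∧ (∀ X : C, t.ge 0 X ↔ X ∈ perpLT S)

/-- `X` is a retract (direct summand) of `Y`. -/
def IsRetractOf (X Y : C) : Prop := ∃ (i : X ⟶ Y) (r : Y ⟶ X), i ≫ r = 𝟙 X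


/-- An indecomposable object: nonzero, and not a nontrivial biproduct. -/
def IndecObj {A : Type*} [Category A] [Limits.HasZeroMorphisms A]
    [HasBinaryBiproducts A] (X : A) : Prop :=
  ¬ IsZero X ∧ ∀ Y Z : A, Nonempty (X ≅ Y ⊞ Z) → IsZero Y ∨ IsZero Z

section Biprod
variable [HasFiniteBiproducts C]

/-- The Karoubi closure: direct summands of finite coproducts of objects of `S`. -/
def Kar (S : Set C) : Set C :=
  {X | ∃ (n : ℕ) (f : Fin n → C), (∀ i, f i ∈ S) ∧ IsRetractOf X (⨁ f)}

/-- A class of objects is Krull–Schmidt: every object is a finite biproduct of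
objects of the class with local endomorphism rings. -/
def KrullSchmidtOn (T : Set C) : Prop :=
  ∀ X ∈ T, ∃ (n : ℕ) (f : Fin n → C),
    (∀ i, f i ∈ T ∧ IsLocalRing (End (f i))) ∧ Nonempty (X ≅ ⨁ f)

/-- The category `C` is Krull–Schmidt. -/
def IsKrullSchmidt : Prop :=
  ∀ X : C, ∃ (n : ℕ) (f : Fin n → C),
    (∀ i, IsLocalRing (End (f i))) ∧ Nonempty (X ≅ ⨁ f)

/-- A silting collection: pairwise non-isomorphic indecomposables whose Karoubi
closure is Krull–Schmidt, such that the perpendicular pair is the t-structure `t`. -/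
structure IsSiltingCollection (S : Set C) (t : TStructure C) : Prop where
  indec : ∀ P ∈ S, IndecObj P
  pairwise_noniso : ∀ P ∈ S, ∀ Q ∈ S, P ≠ Q → IsEmpty (P ≅ Q)
  kar_ks : KrullSchmidtOn (Kar S)
  tstr : IsSiltingTStructureFor S t

end Biprod

/-- Derived projective objects with respect to a t-structure. -/
def IsDerivedProjective (t : TStructure C) (P : C) : Prop :=
  t.le 0 P ∧ ∀ (X : C), t.le 0 X → ∀ f : P ⟶ X⟦(1 : ℤ)⟧, f = 0

/-- The heart of a t-structure, as a class of objects. -/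
def heartSet (t : TStructure C) : Set C := {X | t.le 0 X ∧ t.ge 0 X}

/-- The heart of a t-structure, as a full subcategory. -/
abbrev Heart (t : TStructure C) := ObjectProperty.FullSubcategory (heartSet t)

instance (t : TStructure C) : Category (Heart t) := ObjectProperty.FullSubcategory.category _

instance (P : C → Prop) : Preadditive (ObjectProperty.FullSubcategory P) where
  homGroup X Y := InducedCategory.homEquiv.addCommGroup
  add_comp _ _ _ f f' g := by ext; exact Preadditive.add_comp _ _ _ f.hom f'.hom g.hom
  comp_add _ _ _ f g g' := by ext; exact Preadditive.comp_add _ _ _ f.hom g.hom g'.hom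

/-- Truncation data for a t-structure: the truncation functors `t_{≤0}` (right adjoint
to the inclusion of `D^{t≤0}`), `t_{≥0}` (left adjoint to the inclusion of `D^{t≥0}`),
and the zeroth cohomology functor `H = t_{≤0} ∘ t_{≥0}`. -/
structure TruncationData (t : TStructure C) where
  /-- the zeroth cohomology functor -/
  H : C ⥤ C
  H_heart : ∀ X : C, H.obj X ∈ heartSet t
  τle : C ⥤ C
  τleCounit : τle ⟶ 𝟭 C
  τle_mem : ∀ X : C, t.le 0 (τle.obj X)
  τle_fac : ∀ (X Z : C), t.le 0 Z → ∀ f : Z ⟶ X,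
    ∃! g : Z ⟶ τle.obj X, g ≫ τleCounit.app X = f
  τge : C ⥤ C
  τgeUnit : 𝟭 C ⟶ τge
  τge_mem : ∀ X : C, t.ge 0 (τge.obj X)
  τge_fac : ∀ (X Z : C), t.ge 0 Z → ∀ f : X ⟶ Z,
    ∃! g : τge.obj X ⟶ Z, τgeUnit.app X ≫ g = f
  H_eq : H = τge ⋙ τle

/-- The zeroth cohomology functor, valued in the heart. -/
def TruncationData.Hh {t : TStructure C} (TD : TruncationData t) : C ⥤ Heart t :=
  ObjectProperty.lift _ TD.H TD.H_heart

/-- A projective cover: an essential epimorphism from a projective object. -/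
def IsProjectiveCover {A : Type*} [Category A] {P X : A} (π : P ⟶ X) : Prop :=
  Projective P ∧ Epi π ∧ ∀ (R : A) (g : R ⟶ P), Epi (g ≫ π) → Epi g

/-- A derived projective cover of `X`. -/
def IsDerivedProjectiveCover {t : TStructure C} (TD : TruncationData t)
    {P X : C} (π : P ⟶ X) : Prop :=
  IsDerivedProjective t P ∧ IsProjectiveCover (TD.Hh.map π)

/-- A t-structure is non-degenerate. -/
def NonDegenerate (t : TStructure C) : Prop :=
  (∀ X : C, (∀ n : ℤ, t.le n X) → IsZero X) ∧ (∀ X : C, (∀ n : ℤ, t.ge n X) → IsZero X)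

/-- An object of a category has finite length: bounded chains of subobjects. -/
def FiniteLengthObj {A : Type*} [Category A] (X : A) : Prop :=
  ∃ n : ℕ, ∀ s : Fin (n + 1) → Subobject X, ¬ StrictMono s

/-- `D` has derived projectives: every projective of the heart is `H⁰` of a
derived projective. -/
def HasDerivedProjectives {t : TStructure C} (TD : TruncationData t) : Prop :=
  ∀ Q : Heart t, Projective Q → ∃ P : C, IsDerivedProjective t P ∧ Nonempty (TD.Hh.obj P ≅ Q)

/-- `D` has enough derived projectives. -/
def HasEnoughDerivedProjectives {t : TStructure C} (TD : TruncationData t) : Prop :=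
  EnoughProjectives (Heart t) ∧ HasDerivedProjectives TD

/-- The extension closure of a class of objects. -/
inductive ExtClos (T : Set C) : C → Prop
  | of {X : C} : X ∈ T → ExtClos T X
  | zero {X : C} : IsZero X → ExtClos T X
  | ext {A E B : C} (f : A ⟶ E) (g : E ⟶ B) (h : B ⟶ A⟦(1 : ℤ)⟧) :
      Triangle.mk f g h ∈ (distTriang C) → ExtClos T A → ExtClos T B → ExtClos T E

/-- The Karoubi (retract) closure of a class of objects. -/
def KarClos (T : Set C) : Set C := {X | ∃ Y ∈ T, IsRetractOf X Y}

/-- The triangulated subcategory generated by a class of objects. -/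
inductive TriaClos (T : Set C) : C → Prop
  | of {X : C} : X ∈ T → TriaClos T X
  | zero {X : C} : IsZero X → TriaClos T X
  | shift {X : C} (n : ℤ) : TriaClos T X → TriaClos T (X⟦n⟧)
  | ext {A E B : C} (f : A ⟶ E) (g : E ⟶ B) (h : B ⟶ A⟦(1 : ℤ)⟧) :
      Triangle.mk f g h ∈ (distTriang C) → TriaClos T A → TriaClos T B → TriaClos T E

/-- The thick subcategory generated by a class of objects. -/
inductive ThickClos (T : Set C) : C → Prop
  | of {X : C} : X ∈ T → ThickClos T X
  | zero {X : C} : IsZero X → ThickClos T X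
  | shift {X : C} (n : ℤ) : ThickClos T X → ThickClos T (X⟦n⟧)
  | ext {A E B : C} (f : A ⟶ E) (g : E ⟶ B) (h : B ⟶ A⟦(1 : ℤ)⟧) :
      Triangle.mk f g h ∈ (distTriang C) → ThickClos T A → ThickClos T B → ThickClos T E
  | retract {X Y : C} : IsRetractOf X Y → ThickClos T Y → ThickClos T X

/-- A thick subcategory, as a class of objects. -/
structure IsThickSet (T : Set C) : Prop where
  zero : ∀ X : C, IsZero X → X ∈ T
  shift : ∀ X ∈ T, ∀ n : ℤ, X⟦n⟧ ∈ T
  ext : ∀ (A E B : C) (f : A ⟶ E) (g : E ⟶ B) (h : B ⟶ A⟦(1 : ℤ)⟧),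
    Triangle.mk f g h ∈ (distTriang C) → A ∈ T → B ∈ T → E ∈ T
  retract : ∀ X Y : C, IsRetractOf X Y → Y ∈ T → X ∈ T

/-- A weight structure on the subcategory of `C` given by the class `CC`. -/
structure WeightStructureOn (CC : Set C) where
  le : Set C
  ge : Set C
  le_sub : le ⊆ CC
  ge_sub : ge ⊆ CC
  le_iso : ∀ X Y : C, (X ≅ Y) → X ∈ le → Y ∈ le
  ge_iso : ∀ X Y : C, (X ≅ Y) → X ∈ ge → Y ∈ ge
  le_retract : ∀ X Y : C, IsRetractOf X Y → Y ∈ le → X ∈ le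
  ge_retract : ∀ X Y : C, IsRetractOf X Y → Y ∈ ge → X ∈ ge
  le_shift : ∀ X ∈ le, X⟦(1 : ℤ)⟧ ∈ le
  ge_shift : ∀ X ∈ ge, X⟦(-1 : ℤ)⟧ ∈ ge
  orth : ∀ X : C, X⟦(1 : ℤ)⟧ ∈ ge → ∀ Y ∈ le, ∀ f : X ⟶ Y, f = 0
  decomp : ∀ X ∈ CC, ∃ (A B : C) (f : A ⟶ X) (g : X ⟶ B) (h : B ⟶ A⟦(1 : ℤ)⟧),
    Triangle.mk f g h ∈ (distTriang C) ∧ A⟦(1 : ℤ)⟧ ∈ ge ∧ B ∈ le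

namespace WeightStructureOn

variable {CC : Set C} (w : WeightStructureOn CC)

/-- `C_{w>0}`. -/
def gt : Set C := {X | X⟦(1 : ℤ)⟧ ∈ w.ge}

/-- `C_{w<0}`. -/
def lt : Set C := {X | X⟦(-1 : ℤ)⟧ ∈ w.le}

end WeightStructureOn

end Paper

/-!
A t-structure and a weight structure are each recovered from one half by orthogonality:
`t^{≤0} = ⊥t^{≥1}`, `t^{≥1} = (t^{≤0})⊥`, `w_{≤0} = (w_{>0})⊥`, `w_{≥0} = ⊥w_{<0}` and
`w_{<0} = (w_{≥0})⊥`. Left orthogonality gives `w_{≤0} ⊆ ⊥t^{≥1} = t^{≤0}` and, after a shift,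
`t^{≤0} ⊆ (w_{>0})⊥ = w_{≤0}`, i.e. left adjacency. Conversely, once `t^{≤0} = w_{≤0}` (hence
`t^{≤-1} = w_{<0}`), the five identities above are exactly the strict orthogonality equalities.
-/

namespace Paper

universe v u

section

variable {C : Type u} [Category.{v} C] [Preadditive C]

lemma mem_lPerp_of_iso {T : Set C} {X X' : C} (e : X ≅ X') (hX : X ∈ lPerp T) :
    X' ∈ lPerp T := by
  intro Y hY f
  rw [← cancel_epi e.hom, comp_zero]
  exact hX Y hY _

lemma mem_rPerp_of_iso {T : Set C} {Y Y' : C} (e : Y ≅ Y') (hY : Y ∈ rPerp T) :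
    Y' ∈ rPerp T := by
  intro X hX f
  rw [← cancel_mono e.inv, zero_comp]
  exact hY X hX _

end

lemma IsRetractOf.shift {C : Type u} [Category.{v} C] [HasShift C ℤ] {X Y : C}
    (h : IsRetractOf X Y) (n : ℤ) : IsRetractOf (X⟦n⟧) (Y⟦n⟧) := by
  obtain ⟨i, r, hir⟩ := h
  exact ⟨i⟦n⟧', r⟦n⟧', by rw [← Functor.map_comp, hir, CategoryTheory.Functor.map_id]⟩

variable {C : Type u} [Category.{v} C] [Preadditive C] [HasZeroObject C]
  [HasShift C ℤ] [∀ n : ℤ, (shiftFunctor C n).Additive] [Pretriangulated C]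

open CategoryTheory.Triangulated

namespace Triangle

variable {T : Triangle C} (hT : T ∈ distTriang C)
include hT

lemma isRetractOf_obj₃_of_mor₁_eq_zero (h : T.mor₁ = 0) : IsRetractOf T.obj₂ T.obj₃ := by
  obtain ⟨s, hs⟩ := Triangle.yoneda_exact₂ T hT (𝟙 T.obj₂) (by rw [h, zero_comp])
  exact ⟨T.mor₂, s, hs.symm⟩

lemma isRetractOf_obj₁_of_mor₂_eq_zero (h : T.mor₂ = 0) : IsRetractOf T.obj₂ T.obj₁ := by
  obtain ⟨r, hr⟩ := Triangle.coyoneda_exact₂ T hT (𝟙 T.obj₂) (by rw [h, comp_zero])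
  exact ⟨r, T.mor₁, hr.symm⟩

variable (hT₁₃ : ∀ f : T.obj₁⟦(1 : ℤ)⟧ ⟶ T.obj₃, f = 0)
include hT₁₃

lemma isIso_mor₁_of_mor₂_eq_zero (h : T.mor₂ = 0) : IsIso T.mor₁ := by
  obtain ⟨g, hg⟩ := Triangle.yoneda_exact₃ T hT (𝟙 T.obj₃) (by rw [h, zero_comp])
  refine (Triangle.isZero₃_iff_isIso₁ T hT).1 ?_
  rw [IsZero.iff_id_eq_zero, hg, hT₁₃ g, comp_zero]

lemma isIso_mor₂_of_mor₁_eq_zero (h : T.mor₁ = 0) : IsIso T.mor₂ := by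
  obtain ⟨g, hg⟩ := Triangle.coyoneda_exact₁ T hT (𝟙 (T.obj₁⟦(1 : ℤ)⟧))
    (by rw [h, Functor.map_zero, comp_zero])
  refine (Triangle.isZero₁_iff_isIso₂ T hT).1 ?_
  refine IsZero.of_full_of_faithful_of_isZero (shiftFunctor C (1 : ℤ)) _ ?_
  rw [IsZero.iff_id_eq_zero, hg, hT₁₃ g, zero_comp]

end Triangle

section TStructure

variable (t : TStructure C)

lemma hom_eq_zero_of_shift_le_zero_of_ge_one {X Y : C} (hX : t.le 0 X) (hY : t.ge 1 Y)
    (f : X⟦(1 : ℤ)⟧ ⟶ Y) : f = 0 :=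
  t.zero' f (t.le_monotone (by omega) _ (t.le_shift 0 1 (-1) (by omega) X hX)) hY

lemma setOf_le_zero_eq_lPerp : {X : C | t.le 0 X} = lPerp {Y | t.ge 1 Y} := by
  refine Set.Subset.antisymm (fun X hX Y hY f => t.zero' f hX hY) (fun X hX => ?_)
  obtain ⟨A, B, hA, hB, f, g, h, hT⟩ := t.exists_triangle_zero_one X
  have : IsIso f := Triangle.isIso_mor₁_of_mor₂_eq_zero hT
    (hom_eq_zero_of_shift_le_zero_of_ge_one t hA hB) (hX B hB g)
  exact (t.le 0).prop_of_iso (asIso f) hA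

lemma setOf_ge_one_eq_rPerp : {Y : C | t.ge 1 Y} = rPerp {X | t.le 0 X} := by
  refine Set.Subset.antisymm (fun Y hY X hX f => t.zero' f hX hY) (fun Y hY => ?_)
  obtain ⟨A, B, hA, hB, f, g, h, hT⟩ := t.exists_triangle_zero_one Y
  have : IsIso g := Triangle.isIso_mor₂_of_mor₁_eq_zero hT
    (hom_eq_zero_of_shift_le_zero_of_ge_one t hA hB) (hY A hA f)
  exact (t.ge 1).prop_of_iso (asIso g).symm hB

end TStructure

namespace WeightStructureOn

section

variable {CC : Set C} (w : WeightStructureOn CC)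

lemma shift_neg_one_mem_gt {X : C} (hX : X ∈ w.ge) : X⟦(-1 : ℤ)⟧ ∈ w.gt :=
  w.ge_iso _ _ ((shiftFunctorCompIsoId C (-1 : ℤ) 1 (by omega)).app X).symm hX

lemma shift_one_mem_lt {X : C} (hX : X ∈ w.le) : X⟦(1 : ℤ)⟧ ∈ w.lt :=
  w.le_iso _ _ ((shiftFunctorCompIsoId C (1 : ℤ) (-1) (by omega)).app X).symm hX

lemma hom_eq_zero_of_mem_ge_of_mem_lt {X Y : C} (hX : X ∈ w.ge) (hY : Y ∈ w.lt)
    (f : X ⟶ Y) : f = 0 :=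
  (shiftFunctor C (-1 : ℤ)).map_eq_zero_iff.1 (w.orth _ (w.shift_neg_one_mem_gt hX) _ hY _)

end

variable (w : WeightStructureOn (Set.univ : Set C))

lemma le_eq_rPerp_gt : w.le = rPerp w.gt := by
  refine Set.Subset.antisymm (fun Y hY X hX f => w.orth X hX Y hY f) (fun Y hY => ?_)
  obtain ⟨A, B, f, g, h, hT, hA, hB⟩ := w.decomp Y (Set.mem_univ Y)
  exact w.le_retract Y B (Triangle.isRetractOf_obj₃_of_mor₁_eq_zero hT (hY A hA f)) hB

lemma ge_eq_lPerp_lt : w.ge = lPerp w.lt := by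
  refine Set.Subset.antisymm (fun X hX Y hY f => w.hom_eq_zero_of_mem_ge_of_mem_lt hX hY f)
    (fun X hX => ?_)
  let e : X ≅ X⟦(-1 : ℤ)⟧⟦(1 : ℤ)⟧ := ((shiftFunctorCompIsoId C (-1 : ℤ) 1 (by omega)).app X).symm
  obtain ⟨A, B, f, g, h, hT, hA, hB⟩ := w.decomp (X⟦(-1 : ℤ)⟧) (Set.mem_univ _)
  have hg : g = 0 := (shiftFunctor C (1 : ℤ)).map_eq_zero_iff.1
    (mem_lPerp_of_iso e hX _ (w.shift_one_mem_lt hB) _)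
  have hXA := IsRetractOf.shift (Triangle.isRetractOf_obj₁_of_mor₂_eq_zero hT hg) 1
  exact w.ge_iso _ _ e.symm (w.ge_retract _ _ hXA hA)

lemma lt_eq_rPerp_ge : w.lt = rPerp w.ge := by
  refine Set.Subset.antisymm (fun Y hY X hX f => w.hom_eq_zero_of_mem_ge_of_mem_lt hX hY f)
    (fun Y hY => ?_)
  let e : Y ≅ Y⟦(-1 : ℤ)⟧⟦(1 : ℤ)⟧ := ((shiftFunctorCompIsoId C (-1 : ℤ) 1 (by omega)).app Y).symm
  change Y⟦(-1 : ℤ)⟧ ∈ w.le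
  rw [le_eq_rPerp_gt]
  exact fun Z hZ g => (shiftFunctor C (1 : ℤ)).map_eq_zero_iff.1 (mem_rPerp_of_iso e hY _ hZ _)

end WeightStructureOn

section

variable (w : WeightStructureOn (Set.univ : Set C)) (t : TStructure C)

lemma setOf_le_neg_one_eq_lt (h : {X : C | t.le 0 X} = w.le) :
    {Y : C | t.le (-1) Y} = w.lt := by
  ext Y
  change _ ↔ Y⟦(-1 : ℤ)⟧ ∈ w.le
  rw [← h, ← t.shift_le (-1) 0 (-1) (by omega)]
  rfl

lemma setOf_le_zero_eq_le_of_orthogonal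
    (hge : ∀ X ∈ w.ge, ∀ Y : C, t.le (-1) Y → ∀ f : X ⟶ Y, f = 0)
    (hle : ∀ X ∈ w.le, ∀ Y : C, t.ge 1 Y → ∀ f : X ⟶ Y, f = 0) :
    {X : C | t.le 0 X} = w.le := by
  refine Set.Subset.antisymm (fun X hX => ?_) (fun X hX => ?_)
  · rw [w.le_eq_rPerp_gt]
    exact fun Z hZ f => (shiftFunctor C (1 : ℤ)).map_eq_zero_iff.1
      (hge _ hZ _ (t.le_shift 0 1 (-1) (by omega) X hX) _)
  · rw [setOf_le_zero_eq_lPerp t]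
    exact hle X hX

end

/-- for a weight structure and a t-structure on the same triangulated
category, left adjacency and all strictness levels of left orthogonality coincide. -/
theorem adjacency_lemma (w : WeightStructureOn (Set.univ : Set C)) (t : TStructure C) :
    List.TFAE [
      {X : C | t.le 0 X} = w.le,
      (∀ X ∈ w.ge, ∀ Y : C, t.le (-1) Y → ∀ f : X ⟶ Y, f = 0) ∧
        (∀ X ∈ w.le, ∀ Y : C, t.ge 1 Y → ∀ f : X ⟶ Y, f = 0),
      w.ge = lPerp {Y : C | t.le (-1) Y} ∧ w.le = lPerp {Y : C | t.ge 1 Y},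
      {Y : C | t.le (-1) Y} = rPerp w.ge ∧ {Y : C | t.ge 1 Y} = rPerp w.le,
      (w.ge = lPerp {Y : C | t.le (-1) Y} ∧ w.le = lPerp {Y : C | t.ge 1 Y}) ∧
        ({Y : C | t.le (-1) Y} = rPerp w.ge ∧ {Y : C | t.ge 1 Y} = rPerp w.le)] := by
  tfae_have h13 : 1 → 3 := fun h =>
    ⟨by rw [setOf_le_neg_one_eq_lt w t h, w.ge_eq_lPerp_lt],
      by rw [← h, setOf_le_zero_eq_lPerp t]⟩
  tfae_have h14 : 1 → 4 := fun h =>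
    ⟨by rw [setOf_le_neg_one_eq_lt w t h, w.lt_eq_rPerp_ge],
      by rw [← h, setOf_ge_one_eq_rPerp t]⟩
  tfae_have 3 → 2 := fun h => ⟨h.1.le, h.2.le⟩
  tfae_have 4 → 2 := fun h =>
    ⟨fun X hX Y hY f => h.1.le hY X hX f, fun X hX Y hY f => h.2.le hY X hX f⟩
  tfae_have 2 → 1 := fun h => setOf_le_zero_eq_le_of_orthogonal w t h.1 h.2
  tfae_have 1 → 5 := fun h => ⟨h13 h, h14 h⟩
  tfae_have 5 → 3 := fun h => h.1
  tfae_finish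

end Paper
end

section
/- Let $\mathcal{D}$ be a triangulated category with t-structure $t$ such that $\mathcal{D}$ has enough derived projectives with respect to $t$. Then for every $X \in \mathcal{D}^{t\leq 0}$ there is a morphism $\hat{\pi} \colon \hat{P} \to X$ with $\hat{P}$ derived projective which is a right $\mathrm{DProj}_t(\mathcal{D})$-approximation of $X$: every morphism $P' \to X$ with $P'$ derived projective factors through $\hat{\pi}$. -/
/-!
Take an epimorphism from a projective of the heart onto `H⁰X` and realize that projective as
`H⁰P` with `P` derived projective. Since `Hom(P, X) → Hom(H⁰P, H⁰X)` is onto, the epimorphism is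
`H⁰π` for some `π : P ⟶ X`. With `P ⟶ X ⟶ W ⟶ P⟦1⟧` distinguished, `W ∈ D^{t≤0}` and every map
from `W` to the heart vanishes because `H⁰π` is epi and `Hom(X, B) → Hom(H⁰X, B)` is injective for
`B` in the heart; so `W ∈ D^{t≤-1}`. A derived projective `P'` admits no nonzero map to `W`, hence
every `P' ⟶ X` factors through `π`.
-/

open CategoryTheory Limits Pretriangulated

namespace Paper

universe v u

variable {C : Type u} [Category.{v} C] [Preadditive C] [HasZeroObject C]
  [HasShift C ℤ] [∀ n : ℤ, (shiftFunctor C n).Additive] [Pretriangulated C]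

open CategoryTheory.Triangulated

instance (t : TStructure C) : Category.{v} (Heart t) := ObjectProperty.FullSubcategory.category _

lemma le_zero_truncGE_obj (t : TStructure C) {X : C} (hX : t.le 0 X) :
    t.le 0 ((t.truncGE 0).obj X) := by
  have : t.IsLE X 0 := ⟨hX⟩
  have := t.isLE_truncLT_obj X 0 (-1)
  have := t.isLE_shift ((t.truncLT 0).obj X) (-1) 1 (-2)
  have := t.isLE_of_le (((t.truncLT 0).obj X)⟦(1 : ℤ)⟧) (-2) 0
  exact (t.isLE₂ _ (rot_of_distTriang _ (t.triangleLTGE_distinguished 0 X)) 0 ‹_› ‹_›).le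

lemma le_neg_one_of_forall_heartSet (t : TStructure C) {W : C} (hW : t.le 0 W)
    (h : ∀ B ∈ heartSet t, ∀ b : W ⟶ B, b = 0) : t.le (-1) W := by
  refine ((t.isLE_iff_orthogonal (-1) 0 (by norm_num) W).2 fun Y f _ => ?_).le
  have hB : (t.truncGE 0).obj W ∈ heartSet t := ⟨le_zero_truncGE_obj t hW, t.ge_of_isGE _ 0⟩
  rw [← t.π_descTruncGE f 0, h _ hB ((t.truncGEπ 0).app W), zero_comp]

lemma IsDerivedProjective.hom_eq_zero_of_le_neg_one {t : TStructure C} {P W : C}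
    (hP : IsDerivedProjective t P) (hW : t.le (-1) W) (f : P ⟶ W) : f = 0 := by
  let e := (shiftFunctorCompIsoId C (-1 : ℤ) 1 (by norm_num)).app W
  have h : f ≫ e.inv = 0 := hP.2 _ (t.le_shift (-1) (-1) 0 (by norm_num) W hW) _
  simpa using h =≫ e.hom

lemma IsDerivedProjective.exists_lift_truncGEπ {t : TStructure C} {P : C}
    (hP : IsDerivedProjective t P) {X : C} (h : P ⟶ (t.truncGE 0).obj X) :
    ∃ π : P ⟶ X, π ≫ (t.truncGEπ 0).app X = h := by
  obtain ⟨π, hπ⟩ := Triangle.coyoneda_exact₃ _ (t.triangleLTGE_distinguished 0 X) h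
    (hP.2 _ (t.isLE_truncLT_obj X 0 0).le _)
  exact ⟨π, hπ.symm⟩

namespace TruncationData

variable {t : TStructure C} (TD : TruncationData t)

lemma isIso_τleCounit_app {Z : C} (hZ : t.le 0 Z) : IsIso (TD.τleCounit.app Z) := by
  obtain ⟨s, hs, -⟩ := TD.τle_fac Z Z hZ (𝟙 Z)
  obtain ⟨g, -, huniq⟩ := TD.τle_fac Z (TD.τle.obj Z) (TD.τle_mem Z) (TD.τleCounit.app Z)
  refine ⟨s, ?_, hs⟩
  rw [huniq (TD.τleCounit.app Z ≫ s) (by simp [hs]), huniq (𝟙 _) (Category.id_comp _)]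

lemma τle_map_bijective {Z Z' : C} (hZ : t.le 0 Z) (hZ' : t.le 0 Z') :
    Function.Bijective (TD.τle.map : (Z ⟶ Z') → _) := by
  have := TD.isIso_τleCounit_app hZ
  have := TD.isIso_τleCounit_app hZ'
  have hnat (g : Z ⟶ Z') : TD.τle.map g ≫ TD.τleCounit.app Z' = TD.τleCounit.app Z ≫ g :=
    TD.τleCounit.naturality g
  refine ⟨fun g g' h => ?_, fun k => ⟨inv (TD.τleCounit.app Z) ≫ k ≫ TD.τleCounit.app Z', ?_⟩⟩
  · rw [← cancel_epi (TD.τleCounit.app Z), ← hnat, h, hnat]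
  · rw [← cancel_mono (TD.τleCounit.app Z'), hnat, IsIso.hom_inv_id_assoc]

lemma τge_map_injective {X B : C} (hB : t.ge 0 B) :
    Function.Injective (TD.τge.map : (X ⟶ B) → _) := by
  obtain ⟨r, hr, -⟩ := TD.τge_fac B B hB (𝟙 B)
  have hφ (φ : X ⟶ B) : φ = TD.τgeUnit.app X ≫ TD.τge.map φ ≫ r := by
    simpa [hr] using TD.τgeUnit.naturality φ =≫ r
  intro φ φ' h
  rw [hφ φ, hφ φ', h]

/-- Both are reflections onto `D^{t≥0}`. -/
lemma exists_τgeIsoTruncGE (X : C) : ∃ e : TD.τge.obj X ≅ (t.truncGE 0).obj X,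
    TD.τgeUnit.app X ≫ e.hom = (t.truncGEπ 0).app X := by
  have : t.IsGE (TD.τge.obj X) 0 := ⟨TD.τge_mem X⟩
  obtain ⟨f, hf, -⟩ := TD.τge_fac X _ (t.ge_of_isGE _ 0) ((t.truncGEπ 0).app X)
  obtain ⟨g, -, huniq⟩ := TD.τge_fac X _ (TD.τge_mem X) (TD.τgeUnit.app X)
  refine ⟨⟨f, t.descTruncGE (TD.τgeUnit.app X) 0, ?_, t.from_truncGE_obj_ext (by simp [hf])⟩, hf⟩
  rw [huniq (f ≫ _) (by simp [reassoc_of% hf]), huniq (𝟙 _) (Category.comp_id _)]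

lemma le_zero_τge_obj {X : C} (hX : t.le 0 X) : t.le 0 (TD.τge.obj X) := by
  obtain ⟨e, -⟩ := TD.exists_τgeIsoTruncGE X
  exact (t.le 0).prop_of_iso e.symm (le_zero_truncGE_obj t hX)

lemma exists_lift_τgeUnit {P : C} (hP : IsDerivedProjective t P) {X : C}
    (h : P ⟶ TD.τge.obj X) : ∃ π : P ⟶ X, π ≫ TD.τgeUnit.app X = h := by
  obtain ⟨e, he⟩ := TD.exists_τgeIsoTruncGE X
  obtain ⟨π, hπ⟩ := hP.exists_lift_truncGEπ (h ≫ e.hom)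
  exact ⟨π, by rw [← cancel_mono e.hom, Category.assoc, he, hπ]⟩

lemma τge_map_surjective {P : C} (hP : IsDerivedProjective t P) (X : C) :
    Function.Surjective (TD.τge.map : (P ⟶ X) → _) := by
  intro g
  obtain ⟨π, hπ⟩ := TD.exists_lift_τgeUnit hP (TD.τgeUnit.app P ≫ g)
  obtain ⟨_, -, huniq⟩ := TD.τge_fac P _ (TD.τge_mem X) (TD.τgeUnit.app P ≫ g)
  have hnat : TD.τgeUnit.app P ≫ TD.τge.map π = TD.τgeUnit.app P ≫ g := by
    simpa [hπ] using (TD.τgeUnit.naturality π).symm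
  exact ⟨π, (huniq _ hnat).trans (huniq g rfl).symm⟩

lemma H_map_surjective {P X : C} (hP : IsDerivedProjective t P) (hX : t.le 0 X) :
    Function.Surjective (TD.H.map : (P ⟶ X) → _) := by
  rw [TD.H_eq]
  exact (TD.τle_map_bijective (TD.le_zero_τge_obj hP.1) (TD.le_zero_τge_obj hX)).2.comp
    (TD.τge_map_surjective hP X)

lemma H_map_injective {X B : C} (hX : t.le 0 X) (hB : B ∈ heartSet t) :
    Function.Injective (TD.H.map : (X ⟶ B) → _) := by
  rw [TD.H_eq]
  exact (TD.τle_map_bijective (TD.le_zero_τge_obj hX) (TD.le_zero_τge_obj hB.1)).1.comp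
    (TD.τge_map_injective hB.2)

lemma eq_zero_of_comp_eq_zero_of_epi_Hh_map {P X B : C} (hX : t.le 0 X) {π : P ⟶ X}
    [Epi (TD.Hh.map π)] (hB : B ∈ heartSet t) {φ : X ⟶ B} (h : π ≫ φ = 0) : φ = 0 := by
  refine TD.H_map_injective hX hB ?_
  have : TD.Hh.map φ = TD.Hh.map 0 := by
    rw [← cancel_epi (TD.Hh.map π), ← Functor.map_comp, ← Functor.map_comp, h, comp_zero]
  exact (ObjectProperty.ι _).congr_map this

end TruncationData

lemma le_neg_one_of_distTriang {t : TStructure C} (TD : TruncationData t) {P X W : C}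
    {π : P ⟶ X} {w : X ⟶ W} {δ : W ⟶ P⟦(1 : ℤ)⟧} (hT : Triangle.mk π w δ ∈ distTriang C)
    (hP : t.le 0 P) (hX : t.le 0 X) [Epi (TD.Hh.map π)] : t.le (-1) W := by
  have hP₁ : t.le (-1) (P⟦(1 : ℤ)⟧) := t.le_shift 0 1 (-1) (by norm_num) P hP
  have hW : t.le 0 W := (t.isLE₂ _ (rot_of_distTriang _ hT) 0 ⟨hX⟩
    ⟨t.le_monotone (by norm_num) _ hP₁⟩).le
  refine le_neg_one_of_forall_heartSet t hW fun B hB b => ?_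
  have hwb : w ≫ b = 0 := TD.eq_zero_of_comp_eq_zero_of_epi_Hh_map (π := π) hX hB
    (by rw [← Category.assoc, show π ≫ w = 0 from comp_distTriang_mor_zero₁₂ _ hT, zero_comp])
  obtain ⟨v, hv⟩ : ∃ v : P⟦(1 : ℤ)⟧ ⟶ B, b = δ ≫ v := Triangle.yoneda_exact₃ _ hT b hwb
  rw [hv, t.zero_of_isLE_of_isGE v (-1) 0 (by norm_num) ⟨hP₁⟩ ⟨hB.2⟩, comp_zero]

/-- if `D` has enough derived projectives, then every object of
`D^{t≤0}` admits a right `DProj`-approximation by a derived projective. -/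
theorem enough_derivedProjectives_approximation (t : TStructure C)
    (TD : TruncationData t) (hED : HasEnoughDerivedProjectives TD)
    (X : C) (hX : t.le 0 X) :
    ∃ (P : C) (π : P ⟶ X), IsDerivedProjective t P ∧
      ∀ (P' : C), IsDerivedProjective t P' → ∀ f : P' ⟶ X,
        ∃ g : P' ⟶ P, g ≫ π = f := by
  have : EnoughProjectives (Heart t) := hED.1
  obtain ⟨P, hP, ⟨e⟩⟩ := hED.2 _ (Projective.projective_over (TD.Hh.obj X))
  obtain ⟨π, hπ⟩ := TD.H_map_surjective hP hX (e.hom ≫ Projective.π _).hom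
  have : Epi (TD.Hh.map π) := by
    rw [show TD.Hh.map π = e.hom ≫ Projective.π _ from InducedCategory.hom_ext hπ]
    infer_instance
  obtain ⟨W, w, δ, hT⟩ := distinguished_cocone_triangle π
  have hW := le_neg_one_of_distTriang TD hT hP.1 hX
  refine ⟨P, π, hP, fun P' hP' f => ?_⟩
  obtain ⟨g, hg⟩ := Triangle.coyoneda_exact₂ _ hT f (hP'.hom_eq_zero_of_le_neg_one hW _)
  exact ⟨g, hg.symm⟩

end Paper
end
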